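/- Let u be uniform on {0, 1, ..., N−1} (N ≥ 2) and let û be any integer-valued random variable (on the same probability space) with I(û; u) ≤ log₂ N − 1. Then H(u | û) ≥ 1, and hence there is a universal constant c > 0 such that E[(û − u)²] ≥ c. -/

import Mathlib

open Finset

/-- Shannon entropy (base 2) of a random variable `X` on a finite probability
space with mass function `p`. -/
noncomputable def shannonEntropy {Ω α : Type} [Fintype Ω] [DecidableEq α]
    (p : Ω → ℝ) (X : Ω → α) : ℝ :=
  -∑ ω, p ω * Real.logb 2 (∑ ω', if X ω' = X ω then p ω' else 0)

/-- Conditional Shannon entropy H(A | D) = H(A, D) - H(D). -/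
noncomputable def condEntropy {Ω α β : Type} [Fintype Ω] [DecidableEq α] [DecidableEq β]
    (p : Ω → ℝ) (A : Ω → α) (D : Ω → β) : ℝ :=
  shannonEntropy p (fun ω => (A ω, D ω)) - shannonEntropy p D

/-- Mutual information I(X; Y) = H(X) + H(Y) - H(X, Y). -/
noncomputable def mutualInfo {Ω α β : Type} [Fintype Ω] [DecidableEq α] [DecidableEq β]
    (p : Ω → ℝ) (X : Ω → α) (Y : Ω → β) : ℝ :=
  shannonEntropy p X + shannonEntropy p Y - shannonEntropy p (fun ω => (X ω, Y ω))


/-! `H(u | û) = H(u) - I(û; u) ≥ 1` because `H(u) = log₂ N`.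

For the error bound, Gibbs' inequality against the conditional "prior" `q(u | û) = π(û - u)` with
`π(z) = 2^(-1/2) 8^(-|z|)`, whose total mass `9 / (7√2)` is at most `1`, gives
`H(u | û) ≤ E[-log₂ π(û - u)] = 1/2 + 3 E|û - u| ≤ 1/2 + 3 E(û - u)²`,
so `H(u | û) ≥ 1` forces `E(û - u)² ≥ 1/6`. -/

open Real

lemma logb_two_le_sub_one_div {x : ℝ} (hx : 0 < x) : logb 2 x ≤ (x - 1) / log 2 :=
  div_le_div_of_nonneg_right (log_le_sub_one_of_pos hx) (log_pos one_lt_two).le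

section Entropy

variable {Ω α β : Type} [Fintype Ω] [DecidableEq α] [DecidableEq β] {p : Ω → ℝ}

noncomputable def probEq (p : Ω → ℝ) (X : Ω → α) (x : α) : ℝ :=
  ∑ ω, if X ω = x then p ω else 0

lemma probEq_eq_sum_filter (p : Ω → ℝ) (X : Ω → α) (x : α) :
    probEq p X x = ∑ ω with X ω = x, p ω :=
  (sum_filter _ _).symm

lemma probEq_nonneg (hp : ∀ ω, 0 ≤ p ω) (X : Ω → α) (x : α) : 0 ≤ probEq p X x :=
  sum_nonneg fun ω _ => by split_ifs <;> simp [hp ω]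

lemma le_probEq_apply (hp : ∀ ω, 0 ≤ p ω) (X : Ω → α) (ω : Ω) :
    p ω ≤ probEq p X (X ω) := by
  rw [probEq_eq_sum_filter]
  exact single_le_sum (fun ω _ => hp ω) (mem_filter.mpr ⟨mem_univ ω, rfl⟩)

lemma sum_image_probEq (p : Ω → ℝ) (X : Ω → α) :
    ∑ x ∈ univ.image X, probEq p X x = ∑ ω, p ω := by
  simp only [probEq_eq_sum_filter]
  exact sum_fiberwise_of_maps_to (fun ω _ => mem_image_of_mem X (mem_univ ω)) p

lemma sum_mul_div_probEq_le (hp : ∀ ω, 0 ≤ p ω) (X : Ω → α) {f : α → ℝ}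
    (hf : ∀ x, 0 ≤ f x) :
    ∑ ω, p ω * (f (X ω) / probEq p X (X ω)) ≤ ∑ x ∈ univ.image X, f x := by
  rw [← sum_fiberwise_of_maps_to (fun ω _ => mem_image_of_mem X (mem_univ ω))]
  refine sum_le_sum fun x _ => ?_
  calc ∑ ω with X ω = x, p ω * (f (X ω) / probEq p X (X ω))
      = probEq p X x * (f x / probEq p X x) := by
        rw [probEq_eq_sum_filter, sum_mul]
        exact sum_congr rfl fun ω hω => by
          rw [(mem_filter.mp hω).2, ← probEq_eq_sum_filter]
    _ ≤ f x := by
        rcases (probEq_nonneg hp X x).eq_or_lt with h | h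
        · simp [← h, hf x]
        · rw [mul_div_cancel₀ _ h.ne']

lemma shannonEntropy_eq_sum (p : Ω → ℝ) (X : Ω → α) :
    shannonEntropy p X = -∑ ω, p ω * logb 2 (probEq p X (X ω)) :=
  rfl

lemma shannonEntropy_comp_of_injective {γ : Type} [DecidableEq γ] (p : Ω → ℝ) (X : Ω → α)
    {f : α → γ} (hf : Function.Injective f) :
    shannonEntropy p (f ∘ X) = shannonEntropy p X := by
  simp only [shannonEntropy, Function.comp_apply, hf.eq_iff]

lemma shannonEntropy_eq_neg_logb_of_probEq_eq (hs : ∑ ω, p ω = 1) {X : Ω → α} {c : ℝ}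
    (hX : ∀ ω, probEq p X (X ω) = c) : shannonEntropy p X = -logb 2 c := by
  simp only [shannonEntropy_eq_sum, hX, ← sum_mul, hs, one_mul]

lemma condEntropy_eq_shannonEntropy_sub_mutualInfo (p : Ω → ℝ) (A : Ω → α)
    (D : Ω → β) :
    condEntropy p A D = shannonEntropy p A - mutualInfo p D A := by
  have hswap := shannonEntropy_comp_of_injective p (fun ω => (A ω, D ω)) Prod.swap_injective
  simp only [condEntropy, mutualInfo]
  rw [← hswap]
  simp only [Function.comp_def, Prod.swap_prod_mk]
  ring

lemma condEntropy_eq_sum (p : Ω → ℝ) (A : Ω → α) (D : Ω → β) :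
    condEntropy p A D = ∑ ω, p ω *
      (logb 2 (probEq p D (D ω)) - logb 2 (probEq p (fun ω => (A ω, D ω)) (A ω, D ω))) := by
  simp only [condEntropy, shannonEntropy_eq_sum, mul_sub, sum_sub_distrib]
  ring

lemma sum_image_prod_mul_probEq_le (hp : ∀ ω, 0 ≤ p ω) (A : Ω → α) (D : Ω → β)
    {q : β → α → ℝ} (hq_nonneg : ∀ d a, 0 ≤ q d a)
    (hq_sum : ∀ d (s : Finset α), ∑ a ∈ s, q d a ≤ 1) :
    ∑ v ∈ univ.image (fun ω => (A ω, D ω)), q v.2 v.1 * probEq p D v.2 ≤ ∑ ω, p ω := by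
  have hsub : univ.image (fun ω => (A ω, D ω)) ⊆ univ.image A ×ˢ univ.image D := by
    intro v hv
    obtain ⟨ω, -, rfl⟩ := mem_image.mp hv
    exact mem_product.mpr ⟨mem_image_of_mem A (mem_univ ω), mem_image_of_mem D (mem_univ ω)⟩
  calc ∑ v ∈ univ.image (fun ω => (A ω, D ω)), q v.2 v.1 * probEq p D v.2
      ≤ ∑ v ∈ univ.image A ×ˢ univ.image D, q v.2 v.1 * probEq p D v.2 :=
        sum_le_sum_of_subset_of_nonneg hsub fun v _ _ =>
          mul_nonneg (hq_nonneg _ _) (probEq_nonneg hp D _)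
    _ = ∑ d ∈ univ.image D, (∑ a ∈ univ.image A, q d a) * probEq p D d := by
        rw [sum_product_right]
        simp only [sum_mul]
    _ ≤ ∑ d ∈ univ.image D, probEq p D d :=
        sum_le_sum fun d _ => mul_le_of_le_one_left (probEq_nonneg hp D d) (hq_sum d _)
    _ = ∑ ω, p ω := sum_image_probEq p D

theorem condEntropy_le_sum_mul_neg_logb (hp : ∀ ω, 0 ≤ p ω) (A : Ω → α) (D : Ω → β)
    {q : β → α → ℝ} (hq_pos : ∀ d a, 0 < q d a)
    (hq_sum : ∀ d (s : Finset α), ∑ a ∈ s, q d a ≤ 1) :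
    condEntropy p A D ≤ ∑ ω, p ω * -logb 2 (q (D ω) (A ω)) := by
  set PD := fun ω => probEq p D (D ω)
  set PAD := fun ω => probEq p (fun ω => (A ω, D ω)) (A ω, D ω)
  set r := fun ω => q (D ω) (A ω) * PD ω / PAD ω
  have hterm : ∀ ω, p ω * (logb 2 (PD ω) - logb 2 (PAD ω))
      ≤ p ω * -logb 2 (q (D ω) (A ω)) + (p ω * r ω - p ω) / log 2 := by
    intro ω
    rcases (hp ω).eq_or_lt with h0 | h0
    · simp [← h0]
    have hPAD : 0 < PAD ω := h0.trans_le (le_probEq_apply hp _ ω)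
    have hPD : 0 < PD ω := h0.trans_le (le_probEq_apply hp D ω)
    have hq := hq_pos (D ω) (A ω)
    have hsplit : logb 2 (PD ω) - logb 2 (PAD ω) = -logb 2 (q (D ω) (A ω)) + logb 2 (r ω) := by
      simp only [r]
      rw [logb_div (by positivity) hPAD.ne', logb_mul hq.ne' hPD.ne']
      ring
    have hr := logb_two_le_sub_one_div (show 0 < r ω by positivity)
    calc p ω * (logb 2 (PD ω) - logb 2 (PAD ω))
        ≤ p ω * (-logb 2 (q (D ω) (A ω)) + (r ω - 1) / log 2) := by
          rw [hsplit]; gcongr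
      _ = _ := by ring
  have hr_sum : ∑ ω, p ω * r ω ≤ ∑ ω, p ω :=
    (sum_mul_div_probEq_le hp (fun ω => (A ω, D ω))
      (f := fun v => q v.2 v.1 * probEq p D v.2)
      fun v => mul_nonneg (hq_pos _ _).le (probEq_nonneg hp D _)).trans
    (sum_image_prod_mul_probEq_le hp A D (fun d a => (hq_pos d a).le) hq_sum)
  calc condEntropy p A D = ∑ ω, p ω * (logb 2 (PD ω) - logb 2 (PAD ω)) :=
        condEntropy_eq_sum p A D
    _ ≤ ∑ ω, (p ω * -logb 2 (q (D ω) (A ω)) + (p ω * r ω - p ω) / log 2) :=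
        sum_le_sum fun ω _ => hterm ω
    _ = ∑ ω, p ω * -logb 2 (q (D ω) (A ω)) + (∑ ω, p ω * r ω - ∑ ω, p ω) / log 2 := by
        rw [sum_add_distrib, ← sum_div, sum_sub_distrib]
    _ ≤ ∑ ω, p ω * -logb 2 (q (D ω) (A ω)) := by
        have : (∑ ω, p ω * r ω - ∑ ω, p ω) / log 2 ≤ 0 :=
          div_nonpos_of_nonpos_of_nonneg (by linarith) (log_pos one_lt_two).le
        linarith

end Entropy

noncomputable def intPrior (z : ℤ) : ℝ := (√2)⁻¹ * 8⁻¹ ^ z.natAbs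

lemma intPrior_pos (z : ℤ) : 0 < intPrior z := by
  unfold intPrior
  positivity

lemma hasSum_inv_eight_pow_natAbs : HasSum (fun z : ℤ => (8⁻¹ : ℝ) ^ z.natAbs) (9 / 7) := by
  have hgeom := hasSum_geometric_of_lt_one (r := (8⁻¹ : ℝ)) (by norm_num) (by norm_num)
  have hnat : HasSum (fun n : ℕ => (8⁻¹ : ℝ) ^ (n : ℤ).natAbs) (8 / 7) := by
    simp only [Int.natAbs_natCast]
    convert hgeom using 1
    norm_num
  have hneg : HasSum (fun n : ℕ => (8⁻¹ : ℝ) ^ (-(n + 1 : ℤ)).natAbs) (1 / 7) := by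
    simp only [Int.natAbs_neg, ← Int.natCast_succ, Int.natAbs_natCast, pow_succ']
    rw [show (1 / 7 : ℝ) = 8⁻¹ * (1 - 8⁻¹)⁻¹ by norm_num]
    exact hgeom.mul_left 8⁻¹
  convert HasSum.of_nat_of_neg_add_one (f := fun z : ℤ => (8⁻¹ : ℝ) ^ z.natAbs) hnat hneg
    using 1
  norm_num

lemma sum_intPrior_le_one (s : Finset ℤ) : ∑ z ∈ s, intPrior z ≤ 1 := by
  have h9 : (9 / 7 : ℝ) ≤ √2 := le_sqrt_of_sq_le (by norm_num)
  calc ∑ z ∈ s, intPrior z = (√2)⁻¹ * ∑ z ∈ s, (8⁻¹ : ℝ) ^ z.natAbs := by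
        rw [mul_sum]; rfl
    _ ≤ (√2)⁻¹ * (9 / 7) := by
        gcongr
        exact sum_le_hasSum s (fun _ _ => by positivity) hasSum_inv_eight_pow_natAbs
    _ ≤ 1 := by
        rw [inv_mul_le_iff₀ (by positivity)]
        linarith

lemma neg_logb_intPrior (z : ℤ) : -logb 2 (intPrior z) = 1 / 2 + 3 * z.natAbs := by
  have h8 : logb 2 8 = 3 := by
    rw [show (8 : ℝ) = 2 ^ (3 : ℕ) by norm_num, logb_pow, logb_self_eq_one one_lt_two]
    norm_num
  have hsqrt : logb 2 √2 = 1 / 2 := by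
    rw [logb, log_sqrt zero_le_two]
    field_simp
  rw [intPrior, logb_mul (by positivity) (by positivity), logb_inv, logb_pow, logb_inv, h8,
    hsqrt]
  ring

theorem condEntropy_le_half_add_three_mul_sum_sq {Ω : Type} [Fintype Ω] {p : Ω → ℝ}
    (hp : ∀ ω, 0 ≤ p ω) (hs : ∑ ω, p ω = 1) (A D : Ω → ℤ) :
    condEntropy p A D ≤ 1 / 2 + 3 * ∑ ω, p ω * ((D ω : ℝ) - A ω) ^ 2 := by
  have hq_sum (d : ℤ) (s : Finset ℤ) : ∑ a ∈ s, intPrior (d - a) ≤ 1 := by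
    rw [← sum_image (g := (d - ·)) fun _ _ _ _ h => sub_right_injective h]
    exact sum_intPrior_le_one _
  have hsq (z : ℤ) : (z.natAbs : ℝ) ≤ (z : ℝ) ^ 2 := by
    have := Int.cast_le (R := ℝ) |>.mpr (Int.natAbs_le_self_sq z)
    rw [Nat.cast_natAbs]
    push_cast at this ⊢
    exact this
  calc condEntropy p A D ≤ ∑ ω, p ω * -logb 2 (intPrior (D ω - A ω)) :=
        condEntropy_le_sum_mul_neg_logb hp A D (fun d a => intPrior_pos (d - a)) hq_sum
    _ ≤ ∑ ω, p ω * (1 / 2 + 3 * ((D ω : ℝ) - A ω) ^ 2) := by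
        refine sum_le_sum fun ω _ => mul_le_mul_of_nonneg_left ?_ (hp ω)
        rw [neg_logb_intPrior]
        have := hsq (D ω - A ω)
        push_cast at this
        linarith
    _ = 1 / 2 + 3 * ∑ ω, p ω * ((D ω : ℝ) - A ω) ^ 2 := by
        simp only [mul_add, sum_add_distrib, ← sum_mul, hs, mul_sum]
        ring_nf

/-- If `u` is uniform on `{0, ..., N-1}` (N ≥ 2) and `uhat` is any
integer-valued random variable with `I(uhat; u) ≤ log₂ N - 1`, then
`H(u | uhat) ≥ 1` and `E[(uhat - u)²] ≥ c` for a universal constant `c > 0`. -/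
theorem low_information_implies_large_error :
    ∃ c : ℝ, c > 0 ∧
      ∀ (N : ℕ) (Ω : Type) (_ : Fintype Ω) (p : Ω → ℝ) (u uhat : Ω → ℤ),
        2 ≤ N →
        (∀ ω, 0 ≤ p ω) → (∑ ω, p ω) = 1 →
        -- u is uniformly distributed on {0, 1, ..., N-1}
        (∀ ω, 0 ≤ u ω ∧ u ω < N) →
        (∀ i : ℤ, 0 ≤ i → i < N →
          (∑ ω, if u ω = i then p ω else 0) = 1 / N) →
        mutualInfo p uhat u ≤ Real.logb 2 N - 1 →
        condEntropy p u uhat ≥ 1 ∧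
        (∑ ω, p ω * ((uhat ω : ℝ) - (u ω : ℝ)) ^ 2) ≥ c := by
  refine ⟨1 / 6, by norm_num, fun N Ω _ p u uhat _ hp hs hrange hunif hmi => ?_⟩
  have hu : shannonEntropy p u = logb 2 N := by
    rw [shannonEntropy_eq_neg_logb_of_probEq_eq hs fun ω => hunif _ (hrange ω).1 (hrange ω).2]
    simp
  have hcond : condEntropy p u uhat ≥ 1 := by
    rw [condEntropy_eq_shannonEntropy_sub_mutualInfo, hu]
    linarith
  have hfano := condEntropy_le_half_add_three_mul_sum_sq hp hs u uhat
  exact ⟨hcond, by linarith⟩
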